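/- Let n ≥ 2, let d_1, …, d_n be unit vectors in ℂ^m, and let q = (q_1,…,q_n) be a probability vector. Then (P_s(q) − 1/n)² ≤ ((n−1)/n²) · [ (n−1) − 2 Σ_{i≠k} q_i q_k |⟨d_i, d_k⟩|² ]. -/

import Mathlib

open Matrix ComplexOrder

noncomputable section

/-- Inner product ⟨a, b⟩ = ∑ i, conj (a i) * b i on a finite-dimensional complex space. -/
def ip {k : Type*} [Fintype k] (a b : k → ℂ) : ℂ := ∑ i, star (a i) * b i

/-- The optimal success probability of minimum-error discrimination of the detector
states `d i` with prior probabilities `q i`: the supremum over all POVMs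
`Pov` (positive semidefinite matrices summing to the identity) of
`∑ i, q i * ⟨d i, Pov i (d i)⟩`. -/
def Ps {m n : ℕ} (d : Fin n → Fin m → ℂ) (q : Fin n → ℝ) : ℝ :=
  sSup { x : ℝ | ∃ Pov : Fin n → Matrix (Fin m) (Fin m) ℂ,
    (∀ i, (Pov i).PosSemidef) ∧ (∑ i, Pov i) = 1 ∧
    x = ∑ i, q i * (ip (d i) ((Pov i) *ᵥ (d i))).re }

/-- The visibility `V(ρ̃_A) = √( (2(n−1)/n²) ∑_{i≠k} |⟨d_k, d_i⟩|² |(ρ_A)_{ik}|² )`. -/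
def Vis {m n : ℕ} (d : Fin n → Fin m → ℂ) (ρ : Matrix (Fin n) (Fin n) ℂ) : ℝ :=
  Real.sqrt ((2 * ((n : ℝ) - 1) / (n : ℝ) ^ 2) *
    ∑ i, ∑ k, if i = k then 0 else ‖ip (d k) (d i)‖ ^ 2 * ‖ρ i k‖ ^ 2)

/-- The post-interaction detector state `ρ̃_D = ∑ i, q i • d i (d i)^*`. -/
def detState {m n : ℕ} (d : Fin n → Fin m → ℂ) (q : Fin n → ℝ) :
    Matrix (Fin m) (Fin m) ℂ :=
  ∑ i, (q i : ℂ) • vecMulVec (d i) (star (d i))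

/-- The post-interaction particle state `(ρ̃_A)_{ik} = ⟨d_k, d_i⟩ (ρ_A)_{ik}`. -/
def post {m n : ℕ} (d : Fin n → Fin m → ℂ) (ρ : Matrix (Fin n) (Fin n) ℂ) :
    Matrix (Fin n) (Fin n) ℂ :=
  Matrix.of fun i k => ip (d k) (d i) * ρ i k

/-- The purity `Tr(ρ²)` (as a real number). -/
def purity {k : Type*} [Fintype k] (ρ : Matrix k k ℂ) : ℝ := ((ρ * ρ).trace).re

/-!
For each ordered pair `(i, j)`, the two-outcome measurement `(Π_i, 1 - Π_i)` discriminates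
`d_i` (weight `q_i`) from `d_j` (weight `q_j`), so Helstrom's bound gives
`q_i ⟨d_i, Π_i d_i⟩ + q_j (1 - ⟨d_j, Π_i d_j⟩) ≤ (q_i + q_j + T_ij) / 2` with
`T_ij = √((q_i + q_j)² - 4 q_i q_j |⟨d_i, d_j⟩|²)`. Summing over all pairs and using
`∑ Π_i = 1` gives `n P_s - 1 ≤ ∑ T_ij / 2`. Since `T_ii = 0` and `q_i + q_j ≤ 1` for `i ≠ j`,
Cauchy–Schwarz with weights `q_i + q_j` bounds `(∑ T_ij)²` by
`2(n-1) (2(n-1) - 4 ∑_{i≠j} q_i q_j |⟨d_i, d_j⟩|²)`. Finally the uniform POVM `Π_i = 1/n`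
shows `P_s ≥ 1/n`, so `P_s - 1/n` may be squared.
-/

/-- The trace norm `‖a uu* - b vv*‖₁` for unit vectors `u, v` with `|⟨u, v⟩| = c`. -/
def pureTraceNorm (a b c : ℝ) : ℝ := √((a + b) ^ 2 - 4 * a * b * c ^ 2)

lemma two_mul_mul_mul_le_of_sq_le {a b X Y Z : ℝ} (hX : 0 ≤ X) (hY : 0 ≤ Y)
    (hZ : Z ^ 2 ≤ X * Y) : 2 * a * b * Z ≤ a ^ 2 * X + b ^ 2 * Y := by
  refine le_trans (le_abs_self _) (abs_le_of_sq_le_sq ?_ (by positivity))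
  have : (a * b) ^ 2 * Z ^ 2 ≤ (a * b) ^ 2 * (X * Y) := by gcongr
  nlinarith [sq_nonneg (a ^ 2 * X - b ^ 2 * Y)]

lemma helstrom_bound_real {a b x y z w c : ℝ} (ha : 0 ≤ a) (hb : 0 ≤ b)
    (hx0 : 0 ≤ x) (hx1 : x ≤ 1) (hy0 : 0 ≤ y) (hy1 : y ≤ 1)
    (hzxy : z ^ 2 ≤ x * y) (hwxy : w ^ 2 ≤ (1 - x) * (1 - y)) (hc0 : 0 ≤ c) (hc : c ≤ z + w) :
    2 * (a * x + b * (1 - y)) ≤ a + b + pureTraceNorm a b c := by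
  suffices 2 * (a * x + b * (1 - y)) - (a + b) ≤ pureTraceNorm a b c by linarith
  rcases le_or_gt (2 * (a * x + b * (1 - y)) - (a + b)) 0 with hA | hA
  · exact hA.trans (Real.sqrt_nonneg _)
  have hzw : 2 * a * b * (z * w) ≤ a ^ 2 * (x * (1 - x)) + b ^ 2 * (y * (1 - y)) := by
    refine two_mul_mul_mul_le_of_sq_le (by nlinarith) (by nlinarith) ?_
    calc (z * w) ^ 2 = z ^ 2 * w ^ 2 := by ring
      _ ≤ (x * y) * ((1 - x) * (1 - y)) := mul_le_mul hzxy hwxy (sq_nonneg _) (by nlinarith)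
      _ = _ := by ring
  have hcsq : c ^ 2 ≤ (z + w) ^ 2 := pow_le_pow_left₀ hc0 hc 2
  refine (Real.le_sqrt' hA).2 ?_
  -- `(a + b)² - 4abc² - (2(ax + b(1 - y)) - (a + b))²`
  -- `= 4a²x(1 - x) + 4b²y(1 - y) + 4ab(xy + (1 - x)(1 - y) - c²)`
  nlinarith [mul_nonneg ha hb]

lemma pureTraceNorm_self_one (a : ℝ) : pureTraceNorm a a 1 = 0 := by
  rw [pureTraceNorm]
  ring_nf
  exact Real.sqrt_zero

lemma pureTraceNorm_le_sqrt_mul_sqrt {a b : ℝ} (ha : 0 ≤ a) (hb : 0 ≤ b) (hab : a + b ≤ 1)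
    (c : ℝ) : pureTraceNorm a b c ≤ √(a + b) * √(a + b - 4 * (a * b * c ^ 2)) := by
  rw [← Real.sqrt_mul (by positivity)]
  refine Real.sqrt_le_sqrt ?_
  nlinarith [mul_nonneg (mul_nonneg (mul_nonneg ha hb) (sq_nonneg c)) (sub_nonneg.2 hab)]

lemma sub_four_mul_mul_mul_sq_nonneg {a b c : ℝ} (ha : 0 ≤ a) (hb : 0 ≤ b) (hab : a + b ≤ 1)
    (hc0 : 0 ≤ c) (hc1 : c ≤ 1) : 0 ≤ a + b - 4 * (a * b * c ^ 2) := by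
  have hc2 : c ^ 2 ≤ 1 := pow_le_one₀ hc0 hc1
  nlinarith [mul_le_mul_of_nonneg_left hc2 (mul_nonneg ha hb), sq_nonneg (a - b),
    mul_nonneg (add_nonneg ha hb) (sub_nonneg.2 hab)]

section OffDiagonal

variable {ι : Type*} [Fintype ι] [DecidableEq ι]

lemma sum_sum_ite_eq_sub {G : Type*} [AddCommGroup G] (f : ι → ι → G) :
    ∑ i, ∑ j, (if i = j then 0 else f i j) = ∑ i, ∑ j, f i j - ∑ i, f i i := by
  rw [← Finset.sum_sub_distrib]
  refine Finset.sum_congr rfl fun i _ => ?_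
  rw [← Finset.sum_erase_eq_sub (Finset.mem_univ i), Finset.sum_ite,
    Finset.sum_const_zero, zero_add, Finset.filter_ne]

variable {q : ι → ℝ}

lemma sum_sum_ite_add_eq (hq1 : ∑ i, q i = 1) :
    ∑ i, ∑ j, (if i = j then 0 else q i + q j) = 2 * Fintype.card ι - 2 := by
  simp only [sum_sum_ite_eq_sub, Finset.sum_add_distrib, Finset.sum_const, Finset.card_univ,
    nsmul_eq_mul, hq1, ← Finset.mul_sum]
  ring

lemma add_le_one_of_ne (hq : ∀ i, 0 ≤ q i) (hq1 : ∑ i, q i = 1) {i j : ι} (hij : i ≠ j) :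
    q i + q j ≤ 1 := by
  rw [← Finset.sum_pair hij, ← hq1]
  exact Finset.sum_le_univ_sum_of_nonneg hq

lemma sq_sum_pureTraceNorm_le (hq : ∀ i, 0 ≤ q i) (hq1 : ∑ i, q i = 1) {c : ι → ι → ℝ}
    (hc0 : ∀ i j, 0 ≤ c i j) (hc1 : ∀ i j, c i j ≤ 1) (hcii : ∀ i, c i i = 1) :
    (∑ i, ∑ j, pureTraceNorm (q i) (q j) (c i j)) ^ 2 ≤
      (2 * Fintype.card ι - 2) * (2 * Fintype.card ι - 2 -
        4 * ∑ i, ∑ j, if i = j then 0 else q i * q j * c i j ^ 2) := by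
  set F : ι → ι → ℝ := fun i j => if i = j then 0 else q i + q j
  set G : ι → ι → ℝ := fun i j => F i j - 4 * if i = j then 0 else q i * q j * c i j ^ 2
  have hF0 : ∀ i j, 0 ≤ F i j := fun i j => by
    unfold F; split_ifs
    exacts [le_rfl, add_nonneg (hq i) (hq j)]
  have hG0 : ∀ i j, 0 ≤ G i j := fun i j => by
    unfold G F; split_ifs with hij
    · simp
    · exact sub_four_mul_mul_mul_sq_nonneg (hq i) (hq j) (add_le_one_of_ne hq hq1 hij)
        (hc0 i j) (hc1 i j)
  have hT : ∀ i j, pureTraceNorm (q i) (q j) (c i j) ≤ √(F i j) * √(G i j) := fun i j => by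
    unfold G F; split_ifs with hij
    · simp [hij, hcii, pureTraceNorm_self_one]
    · exact pureTraceNorm_le_sqrt_mul_sqrt (hq i) (hq j) (add_le_one_of_ne hq hq1 hij) _
  have hCS : ∑ i, ∑ j, √(F i j) * √(G i j) ≤ √(∑ i, ∑ j, F i j) * √(∑ i, ∑ j, G i j) := by
    simpa only [Fintype.sum_prod_type] using
      Real.sum_sqrt_mul_sqrt_le (f := fun p : ι × ι => F p.1 p.2) (g := fun p => G p.1 p.2)
        Finset.univ (fun p => hF0 p.1 p.2) (fun p => hG0 p.1 p.2)
  have hFsum : ∑ i, ∑ j, F i j = 2 * Fintype.card ι - 2 := sum_sum_ite_add_eq hq1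
  have hGsum : ∑ i, ∑ j, G i j = 2 * Fintype.card ι - 2 -
      4 * ∑ i, ∑ j, if i = j then 0 else q i * q j * c i j ^ 2 := by
    simp only [G, Finset.sum_sub_distrib, ← Finset.mul_sum, hFsum]
  have hTsum := (Finset.sum_le_sum fun i (_ : i ∈ Finset.univ) =>
    Finset.sum_le_sum fun j (_ : j ∈ Finset.univ) => hT i j).trans hCS
  have hTnonneg : 0 ≤ ∑ i, ∑ j, pureTraceNorm (q i) (q j) (c i j) :=
    Finset.sum_nonneg fun i _ => Finset.sum_nonneg fun j _ => Real.sqrt_nonneg _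
  calc (∑ i, ∑ j, pureTraceNorm (q i) (q j) (c i j)) ^ 2
      ≤ (√(∑ i, ∑ j, F i j) * √(∑ i, ∑ j, G i j)) ^ 2 := pow_le_pow_left₀ hTnonneg hTsum 2
    _ = (∑ i, ∑ j, F i j) * ∑ i, ∑ j, G i j := by
      rw [mul_pow, Real.sq_sqrt (Finset.sum_nonneg fun i _ => Finset.sum_nonneg fun j _ => hF0 i j),
        Real.sq_sqrt (Finset.sum_nonneg fun i _ => Finset.sum_nonneg fun j _ => hG0 i j)]
    _ = _ := by rw [hFsum, hGsum]

end OffDiagonal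

section InnerProduct

variable {k : Type*} [Fintype k]

lemma ip_eq_dotProduct (a b : k → ℂ) : ip a b = star a ⬝ᵥ b := rfl

lemma re_ip_mulVec_nonneg {M : Matrix k k ℂ} (hM : M.PosSemidef) (a : k → ℂ) :
    0 ≤ (ip a (M *ᵥ a)).re :=
  hM.re_dotProduct_nonneg a

lemma norm_ip_mulVec_sq_le {M : Matrix k k ℂ} (hM : M.PosSemidef) (a b : k → ℂ) :
    ‖ip a (M *ᵥ b)‖ ^ 2 ≤ (ip a (M *ᵥ a)).re * (ip b (M *ᵥ b)).re := by
  let := M.toSeminormedAddCommGroup hM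
  let := M.toInnerProductSpace hM
  have hinner : ∀ x y : k → ℂ, (inner ℂ x y : ℂ) = ip x (M *ᵥ y) := fun x y =>
    dotProduct_comm _ _
  have := inner_mul_inner_self_le (𝕜 := ℂ) a b
  rwa [norm_inner_symm b a, ← sq, hinner, hinner, hinner] at this

variable [DecidableEq k]

lemma norm_ip_le_one {u v : k → ℂ} (hu : ip u u = 1) (hv : ip v v = 1) : ‖ip u v‖ ≤ 1 := by
  have := norm_ip_mulVec_sq_le PosSemidef.one u v
  simp only [one_mulVec, hu, hv, Complex.one_re, mul_one] at this
  exact (sq_le_one_iff₀ (norm_nonneg _)).1 this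

lemma ip_sub_mulVec (P : Matrix k k ℂ) (u v : k → ℂ) :
    ip u ((1 - P) *ᵥ v) = ip u v - ip u (P *ᵥ v) := by
  simp only [ip_eq_dotProduct, sub_mulVec, one_mulVec, dotProduct_sub]

lemma re_ip_one_sub_mulVec_self (P : Matrix k k ℂ) {w : k → ℂ} (hw : ip w w = 1) :
    (ip w ((1 - P) *ᵥ w)).re = 1 - (ip w (P *ᵥ w)).re := by
  rw [ip_sub_mulVec, hw, Complex.sub_re, Complex.one_re]

lemma helstrom_bound {P : Matrix k k ℂ} (hP : P.PosSemidef) (hP1 : (1 - P).PosSemidef)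
    {u v : k → ℂ} (hu : ip u u = 1) (hv : ip v v = 1) {a b : ℝ} (ha : 0 ≤ a) (hb : 0 ≤ b) :
    2 * (a * (ip u (P *ᵥ u)).re + b * (1 - (ip v (P *ᵥ v)).re)) ≤
      a + b + pureTraceNorm a b ‖ip u v‖ := by
  have hu1 := re_ip_mulVec_nonneg hP1 u
  have hv1 := re_ip_mulVec_nonneg hP1 v
  have hCS1 := norm_ip_mulVec_sq_le hP1 u v
  rw [re_ip_one_sub_mulVec_self P hu] at hu1 hCS1
  rw [re_ip_one_sub_mulVec_self P hv] at hv1 hCS1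
  refine helstrom_bound_real ha hb (re_ip_mulVec_nonneg hP u) (by linarith)
    (re_ip_mulVec_nonneg hP v) (by linarith) (norm_ip_mulVec_sq_le hP u v) hCS1
    (norm_nonneg _) ?_
  rw [ip_sub_mulVec]
  exact norm_le_norm_add_norm_sub' _ _

end InnerProduct

section POVM

variable {ι k : Type*} [Fintype ι] [DecidableEq k] {P : ι → Matrix k k ℂ}

lemma posSemidef_one_sub_of_sum_eq_one [DecidableEq ι] (hP : ∀ i, (P i).PosSemidef)
    (hsum : ∑ i, P i = 1) (i : ι) : (1 - P i).PosSemidef := by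
  rw [← hsum, ← Finset.add_sum_erase _ _ (Finset.mem_univ i), add_sub_cancel_left]
  exact Matrix.posSemidef_sum _ fun j _ => hP j

lemma sum_re_ip_mulVec_eq_one [Fintype k] (hsum : ∑ i, P i = 1) {v : k → ℂ} (hv : ip v v = 1) :
    ∑ i, (ip v (P i *ᵥ v)).re = 1 := by
  rw [← Complex.re_sum]
  simp only [ip_eq_dotProduct, ← dotProduct_sum, ← sum_mulVec, hsum, one_mulVec]
  rw [← ip_eq_dotProduct, hv, Complex.one_re]

lemma povm_success_le [Fintype k] [DecidableEq ι] (hP : ∀ i, (P i).PosSemidef) (hsum : ∑ i, P i = 1)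
    {d : ι → k → ℂ} (hd : ∀ i, ip (d i) (d i) = 1)
    {q : ι → ℝ} (hq : ∀ i, 0 ≤ q i) (hq1 : ∑ i, q i = 1) :
    Fintype.card ι * ∑ i, q i * (ip (d i) (P i *ᵥ d i)).re - 1 ≤
      (∑ i, ∑ j, pureTraceNorm (q i) (q j) ‖ip (d i) (d j)‖) / 2 := by
  set X : ι → ι → ℝ := fun i j => (ip (d j) (P i *ᵥ d j)).re
  have hpair : ∀ i j, 2 * (q i * X i i + q j * (1 - X i j)) ≤
      q i + q j + pureTraceNorm (q i) (q j) ‖ip (d i) (d j)‖ := fun i j =>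
    helstrom_bound (hP i) (posSemidef_one_sub_of_sum_eq_one hP hsum i) (hd i) (hd j) (hq i) (hq j)
  have hX : ∀ j, ∑ i, X i j = 1 := fun j => sum_re_ip_mulVec_eq_one hsum (hd j)
  have hqX : ∑ i, ∑ j, q j * X i j = 1 := by
    rw [Finset.sum_comm]
    simp only [← Finset.mul_sum, hX, mul_one, hq1]
  have := Finset.sum_le_sum fun i (_ : i ∈ Finset.univ) =>
    Finset.sum_le_sum fun j (_ : j ∈ Finset.univ) => hpair i j
  simp only [mul_add, mul_sub, Finset.sum_add_distrib, Finset.sum_sub_distrib, ← Finset.mul_sum,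
    Finset.sum_const, Finset.card_univ, nsmul_eq_mul, hq1, hqX, mul_one,
    mul_left_comm (q _) (Fintype.card ι : ℝ)] at this
  linarith

end POVM

section SuccessProbability

variable {m n : ℕ} {d : Fin n → Fin m → ℂ} {q : Fin n → ℝ}

def successValues (d : Fin n → Fin m → ℂ) (q : Fin n → ℝ) : Set ℝ :=
  { x : ℝ | ∃ Pov : Fin n → Matrix (Fin m) (Fin m) ℂ,
    (∀ i, (Pov i).PosSemidef) ∧ (∑ i, Pov i) = 1 ∧
    x = ∑ i, q i * (ip (d i) ((Pov i) *ᵥ (d i))).re }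

lemma Ps_eq_sSup_successValues (d : Fin n → Fin m → ℂ) (q : Fin n → ℝ) :
    Ps d q = sSup (successValues d q) := rfl

lemma one_div_mem_successValues (hn : n ≠ 0) (hd : ∀ i, ip (d i) (d i) = 1)
    (hq1 : ∑ i, q i = 1) : 1 / (n : ℝ) ∈ successValues d q := by
  refine ⟨fun _ => (n : ℝ)⁻¹ • 1, fun _ => PosSemidef.one.smul (by positivity), ?_, ?_⟩
  · rw [Finset.sum_const, Finset.card_univ, Fintype.card_fin, ← Nat.cast_smul_eq_nsmul ℝ,
      smul_smul, mul_inv_cancel₀ (Nat.cast_ne_zero.2 hn), one_smul]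
  · simp only [smul_mulVec, one_mulVec, ip_eq_dotProduct, dotProduct_smul]
    simp [← ip_eq_dotProduct, hd, ← Finset.sum_mul, hq1]

lemma le_of_mem_successValues (hd : ∀ i, ip (d i) (d i) = 1) (hq : ∀ i, 0 ≤ q i)
    (hq1 : ∑ i, q i = 1) {x : ℝ} (hx : x ∈ successValues d q) :
    n * x - 1 ≤ (∑ i, ∑ j, pureTraceNorm (q i) (q j) ‖ip (d i) (d j)‖) / 2 := by
  obtain ⟨P, hP, hsum, rfl⟩ := hx
  simpa only [Fintype.card_fin] using povm_success_le hP hsum hd hq hq1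

end SuccessProbability

/-- the path distinguishability bound
`(P_s(q) − 1/n)² ≤ ((n−1)/n²) ((n−1) − 2 ∑_{i≠k} q_i q_k |⟨d_i, d_k⟩|²)`. -/
theorem stmt7 (n m : ℕ) (hn : 2 ≤ n) (d : Fin n → Fin m → ℂ)
    (hd : ∀ i, ip (d i) (d i) = 1)
    (q : Fin n → ℝ) (hq : ∀ i, 0 ≤ q i) (hq1 : ∑ i, q i = 1) :
    (Ps d q - 1 / n) ^ 2 ≤
      (((n : ℝ) - 1) / (n : ℝ) ^ 2) *
        (((n : ℝ) - 1) -
          2 * ∑ i, ∑ k, if i = k then 0 else q i * q k * ‖ip (d i) (d k)‖ ^ 2) := by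
  have hn0 : (0 : ℝ) < n := by norm_cast; omega
  set T := ∑ i, ∑ j, pureTraceNorm (q i) (q j) ‖ip (d i) (d j)‖
  have hub : ∀ x ∈ successValues d q, x ≤ 1 / n + T / (2 * n) := fun x hx => by
    have := le_of_mem_successValues hd hq hq1 hx
    rw [div_add_div _ _ hn0.ne' (by positivity), le_div_iff₀ (by positivity)]
    nlinarith
  have huniform := one_div_mem_successValues (by omega) hd hq1
  have hlow : 1 / n ≤ Ps d q := by
    rw [Ps_eq_sSup_successValues]
    exact le_csSup ⟨_, hub⟩ huniform
  have hup : Ps d q ≤ 1 / n + T / (2 * n) := by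
    rw [Ps_eq_sSup_successValues]
    exact csSup_le ⟨_, huniform⟩ hub
  have hT : T ^ 2 ≤ (2 * n - 2) * (2 * n - 2 -
      4 * ∑ i, ∑ j, if i = j then 0 else q i * q j * ‖ip (d i) (d j)‖ ^ 2) := by
    simpa only [Fintype.card_fin] using sq_sum_pureTraceNorm_le hq hq1
      (fun i j => norm_nonneg (ip (d i) (d j))) (fun i j => norm_ip_le_one (hd i) (hd j))
      (fun i => by simp [hd])
  calc (Ps d q - 1 / n) ^ 2 ≤ (T / (2 * n)) ^ 2 := pow_le_pow_left₀ (by linarith) (by linarith) 2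
    _ = T ^ 2 / (2 * n) ^ 2 := div_pow _ _ _
    _ ≤ _ := by
      rw [div_le_iff₀ (by positivity)]
      refine hT.trans_eq ?_
      field_simp
      ring
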